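/- arXiv:2510.12022 — 3 statements merged into one kernel-verified Lean document; each statement's English description precedes it below -/
import Mathlib

section
/- (Theorem 2, Bloch form.) Let a_i, a_j ∈ ℝ³ be unit vectors and let (r_i, r'_i), (r_j, r'_j) be real pairs with r'_l ≥ 0 and |r_l| + r'_l ≤ 1 for l = i, j. For s ∈ ℝ³ set A_l(s) = r'_l·(a_l·s) + r_l, and define g^{(r)}_±(s) = (A_i(s)−r_i)(A_j(s)−r_j) ± √((1−|r_i|)² − (A_i(s)−r_i)²)·√((1−|r_j|)² − (A_j(s)−r_j)²). Then for all s, s' ∈ ℝ³ with ‖s‖ ≤ 1 and ‖s'‖ ≤ 1, one has g^{(r)}_−(s) ≤ g^{(r)}_+(s'). -/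
noncomputable section
open scoped ComplexOrder

/-- Euclidean 3-space, the home of Bloch vectors and measurement directions. -/
abbrev E3 := EuclideanSpace ℝ (Fin 3)

/-- The standard inner product on ℝ³. -/
def dot (a b : E3) : ℝ := inner ℝ a b

/-- Expectation value of the POVM observable A = r'·(a·σ) + r·𝟙 on the qubit state
with Bloch vector s. -/
def Aexp (r' r : ℝ) (a s : E3) : ℝ := r' * dot a s + r

/-- g^{(r)}_+ of Theorem 2. -/
def grPlus (ri ri' rj rj' : ℝ) (ai aj s : E3) : ℝ :=
  (Aexp ri' ri ai s - ri) * (Aexp rj' rj aj s - rj)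
    + Real.sqrt ((1 - |ri|) ^ 2 - (Aexp ri' ri ai s - ri) ^ 2)
      * Real.sqrt ((1 - |rj|) ^ 2 - (Aexp rj' rj aj s - rj) ^ 2)

/-- g^{(r)}_− of Theorem 2. -/
def grMinus (ri ri' rj rj' : ℝ) (ai aj s : E3) : ℝ :=
  (Aexp ri' ri ai s - ri) * (Aexp rj' rj aj s - rj)
    - Real.sqrt ((1 - |ri|) ^ 2 - (Aexp ri' ri ai s - ri) ^ 2)
      * Real.sqrt ((1 - |rj|) ^ 2 - (Aexp rj' rj aj s - rj) ^ 2)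

/-! The geometric content is the spherical triangle inequality: if a, b are unit vectors and s is
a Bloch vector with a·s = u, b·s = v, then a·b lies between uv − √(1−u²)√(1−v²) and
uv + √(1−u²)√(1−v²). Hence every g^{(r)}_−(s) lies below, and every g^{(r)}_+(s') above,
the state-independent number r'_i r'_j (a_i·a_j); the bound |r| + r' ≤ 1 is what lets the
rescaled square roots of g^{(r)}_± dominate r'·√(1 − u²). -/

open scoped RealInnerProductSpace

section InnerProductSpace

variable {F : Type*} [NormedAddCommGroup F] [InnerProductSpace ℝ F]

lemma norm_sub_inner_smul_sq {b : F} (hb : ‖b‖ = 1) (x : F) :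
    ‖x - ⟪b, x⟫ • b‖ ^ 2 = ‖x‖ ^ 2 - ⟪b, x⟫ ^ 2 := by
  rw [norm_sub_sq_real, norm_smul, real_inner_smul_right, hb, Real.norm_eq_abs, mul_one, sq_abs,
    real_inner_comm b x]
  ring

lemma sq_inner_le_sq_norm_mul_sq_norm (x y : F) : ⟪x, y⟫ ^ 2 ≤ ‖x‖ ^ 2 * ‖y‖ ^ 2 := by
  rw [← mul_pow, ← sq_abs]
  exact pow_le_pow_left₀ (abs_nonneg _) (abs_real_inner_le_norm x y) 2

/-- Cauchy–Schwarz for `a − ⟪b, a⟫ b` and `s − ⟪b, s⟫ b`, both orthogonal to `b`. -/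
lemma sq_inner_sub_inner_mul_inner_le {a b s : F} (hb : ‖b‖ = 1) (hs : ‖s‖ ≤ 1) :
    (⟪a, s⟫ - ⟪a, b⟫ * ⟪b, s⟫) ^ 2 ≤ (‖a‖ ^ 2 - ⟪a, b⟫ ^ 2) * (1 - ⟪b, s⟫ ^ 2) := by
  have hbb : ⟪b, b⟫ = 1 := by rw [real_inner_self_eq_norm_sq, hb, one_pow]
  have hcross : ⟪a - ⟪b, a⟫ • b, s - ⟪b, s⟫ • b⟫ = ⟪a, s⟫ - ⟪a, b⟫ * ⟪b, s⟫ := by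
    simp only [inner_sub_left, inner_sub_right, real_inner_smul_left, real_inner_smul_right, hbb,
      real_inner_comm b a, real_inner_comm s b]
    ring
  have hcs := sq_inner_le_sq_norm_mul_sq_norm (a - ⟪b, a⟫ • b) (s - ⟪b, s⟫ • b)
  rw [hcross, norm_sub_inner_smul_sq hb, norm_sub_inner_smul_sq hb, real_inner_comm a b] at hcs
  have ha_nonneg : 0 ≤ ‖a‖ ^ 2 - ⟪a, b⟫ ^ 2 := by
    rw [← real_inner_comm a b, ← norm_sub_inner_smul_sq hb]; positivity
  have hs_sq : ‖s‖ ^ 2 ≤ 1 := pow_le_one₀ (norm_nonneg s) hs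
  calc (⟪a, s⟫ - ⟪a, b⟫ * ⟪b, s⟫) ^ 2 ≤ (‖a‖ ^ 2 - ⟪a, b⟫ ^ 2) * (‖s‖ ^ 2 - ⟪b, s⟫ ^ 2) := hcs
    _ ≤ (‖a‖ ^ 2 - ⟪a, b⟫ ^ 2) * (1 - ⟪b, s⟫ ^ 2) := by gcongr

lemma sq_inner_le_one {a s : F} (ha : ‖a‖ = 1) (hs : ‖s‖ ≤ 1) : ⟪a, s⟫ ^ 2 ≤ 1 := by
  have h := sq_inner_le_sq_norm_mul_sq_norm a s
  rw [ha, one_pow, one_mul] at h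
  exact h.trans (pow_le_one₀ (norm_nonneg s) hs)

/-- The spherical triangle inequality, in cosines. -/
lemma abs_inner_mul_inner_sub_inner_le {a b s : F} (ha : ‖a‖ = 1) (hb : ‖b‖ = 1) (hs : ‖s‖ ≤ 1) :
    |⟪a, s⟫ * ⟪b, s⟫ - ⟪a, b⟫| ≤ √(1 - ⟪a, s⟫ ^ 2) * √(1 - ⟪b, s⟫ ^ 2) := by
  have h := sq_inner_sub_inner_mul_inner_le (a := a) hb hs
  rw [ha, one_pow] at h
  rw [← Real.sqrt_mul (sub_nonneg.mpr (sq_inner_le_one ha hs))]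
  apply Real.abs_le_sqrt
  -- `(uv - c)² - (1 - u²)(1 - v²)` and `(u - cv)² - (1 - c²)(1 - v²)` are the same polynomial
  linarith

end InnerProductSpace

lemma mul_sqrt_one_sub_sq_le {r' r : ℝ} (hr' : 0 ≤ r') (hr : |r| + r' ≤ 1) (x : ℝ) :
    r' * √(1 - x ^ 2) ≤ √((1 - |r|) ^ 2 - (r' * x) ^ 2) := by
  have hsq : r' ^ 2 ≤ (1 - |r|) ^ 2 := pow_le_pow_left₀ hr' (by linarith) 2
  calc r' * √(1 - x ^ 2) = √(r' ^ 2 * (1 - x ^ 2)) := by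
        rw [Real.sqrt_mul (sq_nonneg r'), Real.sqrt_sq hr']
    _ ≤ √((1 - |r|) ^ 2 - (r' * x) ^ 2) := Real.sqrt_le_sqrt (by nlinarith)

lemma Aexp_sub_self (r' r : ℝ) (a s : E3) : Aexp r' r a s - r = r' * ⟪a, s⟫ := by
  rw [Aexp, dot, add_sub_cancel_right]

lemma abs_Aexp_sub_mul_Aexp_sub_sub_le {ai aj s : E3} (hai : ‖ai‖ = 1) (haj : ‖aj‖ = 1)
    (hs : ‖s‖ ≤ 1) {ri ri' rj rj' : ℝ} (hi' : 0 ≤ ri') (hi : |ri| + ri' ≤ 1) (hj' : 0 ≤ rj')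
    (hj : |rj| + rj' ≤ 1) :
    |(Aexp ri' ri ai s - ri) * (Aexp rj' rj aj s - rj) - ri' * rj' * dot ai aj| ≤
      √((1 - |ri|) ^ 2 - (Aexp ri' ri ai s - ri) ^ 2) *
        √((1 - |rj|) ^ 2 - (Aexp rj' rj aj s - rj) ^ 2) := by
  simp only [Aexp_sub_self, dot]
  calc |ri' * ⟪ai, s⟫ * (rj' * ⟪aj, s⟫) - ri' * rj' * ⟪ai, aj⟫|
        = ri' * rj' * |⟪ai, s⟫ * ⟪aj, s⟫ - ⟪ai, aj⟫| := by
          rw [show ri' * ⟪ai, s⟫ * (rj' * ⟪aj, s⟫) - ri' * rj' * ⟪ai, aj⟫ =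
              ri' * rj' * (⟪ai, s⟫ * ⟪aj, s⟫ - ⟪ai, aj⟫) by ring,
            abs_mul, abs_of_nonneg (mul_nonneg hi' hj')]
    _ ≤ ri' * rj' * (√(1 - ⟪ai, s⟫ ^ 2) * √(1 - ⟪aj, s⟫ ^ 2)) :=
          mul_le_mul_of_nonneg_left (abs_inner_mul_inner_sub_inner_le hai haj hs)
            (mul_nonneg hi' hj')
    _ = (ri' * √(1 - ⟪ai, s⟫ ^ 2)) * (rj' * √(1 - ⟪aj, s⟫ ^ 2)) := by ring
    _ ≤ _ := mul_le_mul (mul_sqrt_one_sub_sq_le hi' hi _) (mul_sqrt_one_sub_sq_le hj' hj _)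
          (by positivity) (Real.sqrt_nonneg _)

lemma grMinus_le_mul_dot {ai aj s : E3} (hai : ‖ai‖ = 1) (haj : ‖aj‖ = 1) (hs : ‖s‖ ≤ 1)
    {ri ri' rj rj' : ℝ} (hi' : 0 ≤ ri') (hi : |ri| + ri' ≤ 1) (hj' : 0 ≤ rj')
    (hj : |rj| + rj' ≤ 1) :
    grMinus ri ri' rj rj' ai aj s ≤ ri' * rj' * dot ai aj := by
  have h := abs_le.mp (abs_Aexp_sub_mul_Aexp_sub_sub_le hai haj hs hi' hi hj' hj)
  rw [grMinus]
  linarith [h.2]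

lemma mul_dot_le_grPlus {ai aj s : E3} (hai : ‖ai‖ = 1) (haj : ‖aj‖ = 1) (hs : ‖s‖ ≤ 1)
    {ri ri' rj rj' : ℝ} (hi' : 0 ≤ ri') (hi : |ri| + ri' ≤ 1) (hj' : 0 ≤ rj')
    (hj : |rj| + rj' ≤ 1) :
    ri' * rj' * dot ai aj ≤ grPlus ri ri' rj rj' ai aj s := by
  have h := abs_le.mp (abs_Aexp_sub_mul_Aexp_sub_sub_le hai haj hs hi' hi hj' hj)
  rw [grPlus]
  linarith [h.1]

/-- Theorem 2 (Bloch form): for two binary qubit POVMs, the associated functions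
satisfy g^{(r)}_−(s) ≤ g^{(r)}_+(s') on all Bloch vectors s, s'. -/
theorem theorem2_povm_criterion (ai aj : E3) (hai : ‖ai‖ = 1) (haj : ‖aj‖ = 1)
    (ri ri' rj rj' : ℝ) (hi' : 0 ≤ ri') (hi : |ri| + ri' ≤ 1)
    (hj' : 0 ≤ rj') (hj : |rj| + rj' ≤ 1) :
    ∀ s s' : E3, ‖s‖ ≤ 1 → ‖s'‖ ≤ 1 →
      grMinus ri ri' rj rj' ai aj s ≤ grPlus ri ri' rj rj' ai aj s' := fun _ _ hs hs' =>
  (grMinus_le_mul_dot hai haj hs hi' hi hj' hj).trans (mul_dot_le_grPlus hai haj hs' hi' hi hj' hj)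
end
end

section
/- (Theorem 2, density-matrix form.) Let a_i, a_j ∈ ℝ³ be unit vectors, and let (r_i, r'_i), (r_j, r'_j) be real pairs with r'_l ≥ 0 and |r_l| + r'_l ≤ 1 for l = i, j. Define the observables A_l = r'_l·σ(a_l) + r_l·𝟙 (2×2 complex matrices). Then for any two qubit density matrices ρ, ρ', writing x_ρ = Re(Tr(ρ·A_i)) and y_ρ = Re(Tr(ρ·A_j)), one has (x_ρ−r_i)(y_ρ−r_j) − √((1−|r_i|)² − (x_ρ−r_i)²)·√((1−|r_j|)² − (y_ρ−r_j)²) ≤ (x_{ρ'}−r_i)(y_{ρ'}−r_j) + √((1−|r_i|)² − (x_{ρ'}−r_i)²)·√((1−|r_j|)² − (y_{ρ'}−r_j)²). -/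
noncomputable section
open scoped ComplexOrder

/-- σ(a) = a₁σₓ + a₂σ_y + a₃σ_z as an explicit 2×2 complex matrix. -/
def pauli (a : E3) : Matrix (Fin 2) (Fin 2) ℂ :=
  !![(a 2 : ℂ), (a 0 : ℂ) - Complex.I * (a 1 : ℂ);
     (a 0 : ℂ) + Complex.I * (a 1 : ℂ), -(a 2 : ℂ)]

/-- The general binary qubit observable A = r'·σ(a) + r·𝟙. -/
def obsA (r' r : ℝ) (a : E3) : Matrix (Fin 2) (Fin 2) ℂ :=
  (r' : ℂ) • pauli a + (r : ℂ) • 1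

/-! A qubit state is `ρ = (1 + σ(n)) / 2` with Bloch vector `‖n‖ ≤ 1`, and then
`Re Tr(ρ A) = r' ⟪a, n⟫ + r`. Nonnegativity of the Gram determinant of `aᵢ, aⱼ, n` gives
`(⟪aᵢ, aⱼ⟫ - ⟪aᵢ, n⟫⟪aⱼ, n⟫)² ≤ (1 - ⟪aᵢ, n⟫²)(1 - ⟪aⱼ, n⟫²)`, which together with
`r' ≤ 1 - |r|` places the state-independent number `r'ᵢ r'ⱼ ⟪aᵢ, aⱼ⟫` between the lower
bound for `ρ` and the upper bound for `ρ'`. -/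

open Matrix
open scoped InnerProductSpace

section InnerProduct

variable {E : Type*} [NormedAddCommGroup E] [InnerProductSpace ℝ E]

theorem sq_real_inner_le_one {a b : E} (ha : ‖a‖ ≤ 1) (hb : ‖b‖ ≤ 1) : ⟪a, b⟫_ℝ ^ 2 ≤ 1 := by
  rw [sq_le_one_iff_abs_le_one]
  exact (abs_real_inner_le_norm a b).trans (mul_le_one₀ ha (norm_nonneg b) hb)

theorem sq_inner_sub_inner_mul_inner_le_s7 {a b n : E} (ha : ‖a‖ = 1) (hb : ‖b‖ = 1)
    (hn : ‖n‖ ≤ 1) :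
    (⟪a, b⟫_ℝ - ⟪a, n⟫_ℝ * ⟪b, n⟫_ℝ) ^ 2 ≤ (1 - ⟪a, n⟫_ℝ ^ 2) * (1 - ⟪b, n⟫_ℝ ^ 2) := by
  have hdet : (0 : ℝ) ≤ (gram ℝ ![a, b, n]).det := (posSemidef_gram ℝ _).det_nonneg
  have hgram : (gram ℝ ![a, b, n]).det = ‖n‖ ^ 2 * (1 - ⟪a, b⟫_ℝ ^ 2)
      - (⟪a, n⟫_ℝ ^ 2 + ⟪b, n⟫_ℝ ^ 2 - 2 * ⟪a, b⟫_ℝ * ⟪a, n⟫_ℝ * ⟪b, n⟫_ℝ) := by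
    simp [det_fin_three, real_inner_comm, ha, hb]
    ring
  have hab : 0 ≤ 1 - ⟪a, b⟫_ℝ ^ 2 := sub_nonneg.2 (sq_real_inner_le_one ha.le hb.le)
  have hn2 : ‖n‖ ^ 2 ≤ 1 := pow_le_one₀ (norm_nonneg n) hn
  nlinarith [mul_le_mul_of_nonneg_right hn2 hab]

end InnerProduct

theorem abs_mul_mul_sub_le_sqrt_mul_sqrt {g p q r s c d : ℝ} (hr : 0 ≤ r) (hrc : r ≤ c)
    (hs : 0 ≤ s) (hsd : s ≤ d) (hp : p ^ 2 ≤ 1) (hq : q ^ 2 ≤ 1)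
    (hg : (g - p * q) ^ 2 ≤ (1 - p ^ 2) * (1 - q ^ 2)) :
    |r * p * (s * q) - r * s * g| ≤ √(c ^ 2 - (r * p) ^ 2) * √(d ^ 2 - (s * q) ^ 2) := by
  have hp' : 0 ≤ r ^ 2 * (1 - p ^ 2) := mul_nonneg (sq_nonneg r) (sub_nonneg.2 hp)
  have hq' : 0 ≤ s ^ 2 * (1 - q ^ 2) := mul_nonneg (sq_nonneg s) (sub_nonneg.2 hq)
  have hpc : r ^ 2 * (1 - p ^ 2) ≤ c ^ 2 - (r * p) ^ 2 := by nlinarith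
  have hqd : s ^ 2 * (1 - q ^ 2) ≤ d ^ 2 - (s * q) ^ 2 := by nlinarith
  rw [← Real.sqrt_mul (hp'.trans hpc)]
  apply Real.abs_le_sqrt
  calc (r * p * (s * q) - r * s * g) ^ 2 = (r * s) ^ 2 * (g - p * q) ^ 2 := by ring
    _ ≤ (r * s) ^ 2 * ((1 - p ^ 2) * (1 - q ^ 2)) := by gcongr
    _ = r ^ 2 * (1 - p ^ 2) * (s ^ 2 * (1 - q ^ 2)) := by ring
    _ ≤ (c ^ 2 - (r * p) ^ 2) * (d ^ 2 - (s * q) ^ 2) := mul_le_mul hpc hqd hq' (hp'.trans hpc)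

/-- The Bloch vector `n` of `ρ`: `ρ = (1 + σ(n)) / 2` when `ρ` is Hermitian of trace one. -/
def blochVector (ρ : Matrix (Fin 2) (Fin 2) ℂ) : E3 :=
  !₂[2 * (ρ 0 1).re, -2 * (ρ 0 1).im, (ρ 0 0).re - (ρ 1 1).re]

theorem re_trace_mul_pauli {ρ : Matrix (Fin 2) (Fin 2) ℂ} (hρ : ρ.IsHermitian) (a : E3) :
    (ρ * pauli a).trace.re = ⟪a, blochVector ρ⟫_ℝ := by
  have h10 : ρ 1 0 = star (ρ 0 1) := (hρ.apply 1 0).symm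
  simp [pauli, blochVector, trace_fin_two, mul_apply, h10, PiLp.inner_apply, Fin.sum_univ_three]
  ring

theorem re_trace_mul_obsA {ρ : Matrix (Fin 2) (Fin 2) ℂ} (hρ : ρ.IsHermitian) (htr : ρ.trace = 1)
    (r' r : ℝ) (a : E3) :
    (ρ * obsA r' r a).trace.re = r' * ⟪a, blochVector ρ⟫_ℝ + r := by
  simp [obsA, mul_add, htr, re_trace_mul_pauli hρ]

theorem norm_blochVector_le_one {ρ : Matrix (Fin 2) (Fin 2) ℂ} (hρ : ρ.PosSemidef)
    (htr : ρ.trace = 1) : ‖blochVector ρ‖ ≤ 1 := by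
  have htr' : (ρ 0 0).re + (ρ 1 1).re = 1 := by
    simpa [trace_fin_two] using congrArg Complex.re htr
  have hdet : (ρ 0 1).re ^ 2 + (ρ 0 1).im ^ 2 ≤ (ρ 0 0).re * (ρ 1 1).re := by
    have h10 : ρ 1 0 = star (ρ 0 1) := (hρ.1.apply 1 0).symm
    have h00 : (ρ 0 0).im = 0 := Complex.conj_eq_iff_im.1 (hρ.1.apply 0 0)
    have := (Complex.nonneg_iff.1 hρ.det_nonneg).1
    simp [det_fin_two, h10, h00] at this
    linarith
  -- `‖blochVector ρ‖² = (Tr ρ)² - 4 det ρ`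
  rw [← sq_le_one_iff₀ (norm_nonneg _), EuclideanSpace.real_norm_sq_eq, Fin.sum_univ_three]
  simp [blochVector]
  nlinarith

theorem abs_centered_product_sub_inner_le {ai aj : E3} (hai : ‖ai‖ = 1) (haj : ‖aj‖ = 1)
    {ri ri' rj rj' : ℝ} (hi' : 0 ≤ ri') (hi : |ri| + ri' ≤ 1) (hj' : 0 ≤ rj')
    (hj : |rj| + rj' ≤ 1) {ρ : Matrix (Fin 2) (Fin 2) ℂ} (hρ : ρ.PosSemidef)
    (htr : ρ.trace = 1) :
    |((ρ * obsA ri' ri ai).trace.re - ri) * ((ρ * obsA rj' rj aj).trace.re - rj)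
        - ri' * rj' * ⟪ai, aj⟫_ℝ|
      ≤ √((1 - |ri|) ^ 2 - ((ρ * obsA ri' ri ai).trace.re - ri) ^ 2)
        * √((1 - |rj|) ^ 2 - ((ρ * obsA rj' rj aj).trace.re - rj) ^ 2) := by
  have hn := norm_blochVector_le_one hρ htr
  simp only [re_trace_mul_obsA hρ.1 htr, add_sub_cancel_right]
  exact abs_mul_mul_sub_le_sqrt_mul_sqrt hi' (by linarith) hj' (by linarith)
    (sq_real_inner_le_one hai.le hn) (sq_real_inner_le_one haj.le hn)
    (sq_inner_sub_inner_mul_inner_le_s7 hai haj hn)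

/-- Theorem 2 (density-matrix form): with x_ρ = Re Tr(ρA_i), y_ρ = Re Tr(ρA_j) for
A_l = r'_l·σ(a_l) + r_l·𝟙, any two qubit density matrices ρ, ρ' satisfy
g^{(r)}_−(ρ) ≤ g^{(r)}_+(ρ'). -/
theorem theorem2_density_matrix_form (ai aj : E3) (hai : ‖ai‖ = 1) (haj : ‖aj‖ = 1)
    (ri ri' rj rj' : ℝ) (hi' : 0 ≤ ri') (hi : |ri| + ri' ≤ 1)
    (hj' : 0 ≤ rj') (hj : |rj| + rj' ≤ 1)
    (ρ ρ' : Matrix (Fin 2) (Fin 2) ℂ)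
    (hρ : ρ.PosSemidef) (hρtr : ρ.trace = 1)
    (hρ' : ρ'.PosSemidef) (hρ'tr : ρ'.trace = 1) :
    ((ρ * obsA ri' ri ai).trace.re - ri) * ((ρ * obsA rj' rj aj).trace.re - rj)
        - Real.sqrt ((1 - |ri|) ^ 2 - ((ρ * obsA ri' ri ai).trace.re - ri) ^ 2)
          * Real.sqrt ((1 - |rj|) ^ 2 - ((ρ * obsA rj' rj aj).trace.re - rj) ^ 2)
      ≤ ((ρ' * obsA ri' ri ai).trace.re - ri) * ((ρ' * obsA rj' rj aj).trace.re - rj)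
        + Real.sqrt ((1 - |ri|) ^ 2 - ((ρ' * obsA ri' ri ai).trace.re - ri) ^ 2)
          * Real.sqrt ((1 - |rj|) ^ 2 - ((ρ' * obsA rj' rj aj).trace.re - rj) ^ 2) := by
  obtain ⟨-, hupper⟩ := abs_le.1 (abs_centered_product_sub_inner_le hai haj hi' hi hj' hj hρ hρtr)
  obtain ⟨hlower, -⟩ :=
    abs_le.1 (abs_centered_product_sub_inner_le hai haj hi' hi hj' hj hρ' hρ'tr)
  linarith
end
end

section
/- (Unique determination of measurements from a local correlation.) Let c = cos(π/12). Suppose a₀, a₁ ∈ ℝ³ are unit vectors and s₁, s₂, s₃, s₄ ∈ ℝ³ have ‖s_k‖ ≤ 1, with a₀·s₁ = 1, a₁·s₁ = c; a₀·s₂ = −1, a₁·s₂ = −c; a₀·s₃ = c, a₁·s₃ = 1; a₀·s₄ = −c, a₁·s₄ = −1. Then a₀·a₁ = c, s₁ = a₀, s₂ = −a₀, s₃ = a₁ and s₄ = −a₁; in particular the angle between the two measurements and all four conditional states are uniquely determined by the correlation. -/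
noncomputable section
open scoped ComplexOrder

section

variable {F : Type*} [NormedAddCommGroup F] [InnerProductSpace ℝ F]

/-- Cauchy–Schwarz forces `‖s‖ = 1`, and then this is its equality case. -/
theorem eq_of_inner_eq_one_of_norm_le_one {a s : F} (ha : ‖a‖ = 1) (hs : ‖s‖ ≤ 1)
    (h : inner ℝ a s = 1) : s = a := by
  have hs_unit : ‖s‖ = 1 :=
    le_antisymm hs (by simpa [h, ha] using real_inner_le_norm a s)
  exact ((inner_eq_one_iff_of_norm_eq_one ha hs_unit).1 h).symm

theorem eq_neg_of_inner_eq_neg_one_of_norm_le_one {a s : F} (ha : ‖a‖ = 1) (hs : ‖s‖ ≤ 1)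
    (h : inner ℝ a s = -1) : s = -a := by
  have h_neg : inner ℝ a (-s) = 1 := by rw [inner_neg_right, h, neg_neg]
  exact neg_eq_iff_eq_neg.1 (eq_of_inner_eq_one_of_norm_le_one ha (by rwa [norm_neg]) h_neg)

end

theorem unique_determination_from_local_correlation_general
    (a₀ a₁ s₁ s₂ s₃ s₄ : E3)
    (ha₀ : ‖a₀‖ = 1) (ha₁ : ‖a₁‖ = 1)
    (hs₁ : ‖s₁‖ ≤ 1) (hs₂ : ‖s₂‖ ≤ 1) (hs₃ : ‖s₃‖ ≤ 1) (hs₄ : ‖s₄‖ ≤ 1)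
    (h₁₀ : dot a₀ s₁ = 1)
    (h₂₀ : dot a₀ s₂ = -1)
    (h₃₀ : dot a₀ s₃ = Real.cos (Real.pi / 12)) (h₃₁ : dot a₁ s₃ = 1)
    (h₄₁ : dot a₁ s₄ = -1) :
    dot a₀ a₁ = Real.cos (Real.pi / 12) ∧
    s₁ = a₀ ∧ s₂ = -a₀ ∧ s₃ = a₁ ∧ s₄ = -a₁ := by
  have e₃ : s₃ = a₁ := eq_of_inner_eq_one_of_norm_le_one ha₁ hs₃ h₃₁
  refine ⟨e₃ ▸ h₃₀, eq_of_inner_eq_one_of_norm_le_one ha₀ hs₁ h₁₀,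
    eq_neg_of_inner_eq_neg_one_of_norm_le_one ha₀ hs₂ h₂₀, e₃,
    eq_neg_of_inner_eq_neg_one_of_norm_le_one ha₁ hs₄ h₄₁⟩

/-- Unique determination of measurements and states from the paper's local Bell
correlation with conditional expectations (1, c), (−1, −c), (c, 1), (−c, −1),
where c = cos(π/12): the measurement angle is a₀·a₁ = c and the four conditional
Bloch vectors are ±a₀, ±a₁. -/
theorem unique_determination_from_local_correlation
    (a₀ a₁ s₁ s₂ s₃ s₄ : E3)
    (ha₀ : ‖a₀‖ = 1) (ha₁ : ‖a₁‖ = 1)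
    (hs₁ : ‖s₁‖ ≤ 1) (hs₂ : ‖s₂‖ ≤ 1) (hs₃ : ‖s₃‖ ≤ 1) (hs₄ : ‖s₄‖ ≤ 1)
    (h₁₀ : dot a₀ s₁ = 1) (h₁₁ : dot a₁ s₁ = Real.cos (Real.pi / 12))
    (h₂₀ : dot a₀ s₂ = -1) (h₂₁ : dot a₁ s₂ = -Real.cos (Real.pi / 12))
    (h₃₀ : dot a₀ s₃ = Real.cos (Real.pi / 12)) (h₃₁ : dot a₁ s₃ = 1)
    (h₄₀ : dot a₀ s₄ = -Real.cos (Real.pi / 12)) (h₄₁ : dot a₁ s₄ = -1) :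
    dot a₀ a₁ = Real.cos (Real.pi / 12) ∧
    s₁ = a₀ ∧ s₂ = -a₀ ∧ s₃ = a₁ ∧ s₄ = -a₁ :=
  unique_determination_from_local_correlation_general a₀ a₁ s₁ s₂ s₃ s₄ ha₀ ha₁ hs₁ hs₂ hs₃ hs₄ h₁₀
    h₂₀ h₃₀ h₃₁ h₄₁
end
end
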